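/- Let w : 𝕋 → ℂ be C¹, m = m(w), and u = e^{iJ(w)} w with (d/dx)J(w) = |w|² − m. Define the DNLS Hamiltonian H(u) = Im∫₀^{2π} u \bar{u_x} dx + (1/2)∫₀^{2π}|u|⁴ dx. Then H(u) = Im∫₀^{2π} w \bar{w_x} dx − (1/2)∫₀^{2π}|w|⁴ dx + 2π m². -/

import Mathlib

open MeasureTheory

/-- The mass `m(w) = (1/2π) ∫₀^{2π} |w|² dx`. -/
noncomputable def mass (w : ℝ → ℂ) : ℝ :=
  (1 / (2 * Real.pi)) * ∫ y in (0:ℝ)..(2 * Real.pi), ‖w y‖ ^ 2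

/-!
Pointwise, `u_x = e^{iJ} (i (|w|² − m) w + w_x)`, so the phase cancels in `u ū_x` and
`Im (u ū_x) = Im (w w̄_x) − (|w|² − m) |w|²`, while `|u| = |w|`. Integrating, the cross term
contributes `−∫ |w|⁴ + m ∫ |w|² = −∫ |w|⁴ + 2π m²`.
-/

open Complex ComplexConjugate

lemma im_exp_I_mul_mul_conj (θ a : ℝ) (z z' : ℂ) :
    (exp (I * θ) * z * conj (exp (I * θ) * (I * a * z + z'))).im
      = (z * conj z').im - a * ‖z‖ ^ 2 := by
  have hphase : exp (I * θ) * conj (exp (I * θ)) = 1 := by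
    rw [mul_conj, ← ofReal_one, ofReal_inj, normSq_eq_norm_sq, norm_exp_I_mul_ofReal, one_pow]
  have hsq : z * conj z = (‖z‖ ^ 2 : ℝ) := by
    rw [mul_conj, normSq_eq_norm_sq]
  calc (exp (I * θ) * z * conj (exp (I * θ) * (I * a * z + z'))).im
      = (exp (I * θ) * conj (exp (I * θ)) * (-I * a * (z * conj z) + z * conj z')).im := by
        simp only [map_mul, map_add, conj_I, conj_ofReal]
        ring_nf
    _ = (z * conj z').im - a * ‖z‖ ^ 2 := by
        rw [hphase, hsq, one_mul]
        simp only [add_im, mul_im, mul_re, neg_re, neg_im, I_re, I_im, ofReal_re, ofReal_im]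
        ring

lemma HasDerivAt.cexp_I_mul_ofReal_mul {J : ℝ → ℝ} {w : ℝ → ℂ} {j : ℝ} {w' : ℂ} {x : ℝ}
    (hJ : HasDerivAt J j x) (hw : HasDerivAt w w' x) :
    HasDerivAt (fun y => Complex.exp (I * J y) * w y)
      (Complex.exp (I * J x) * (I * j * w x + w')) x :=
  (((hJ.ofReal_comp.const_mul I).cexp).mul hw).congr_deriv (by ring)

lemma integral_norm_sq_eq_two_pi_mul_mass (w : ℝ → ℂ) :
    ∫ x in (0:ℝ)..(2 * Real.pi), ‖w x‖ ^ 2 = 2 * Real.pi * mass w := by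
  rw [mass]
  field_simp

lemma integral_sub_mass_mul_norm_sq {w : ℝ → ℂ} (hw : Continuous w) :
    ∫ x in (0:ℝ)..(2 * Real.pi), (‖w x‖ ^ 2 - mass w) * ‖w x‖ ^ 2
      = (∫ x in (0:ℝ)..(2 * Real.pi), ‖w x‖ ^ 4) - 2 * Real.pi * mass w ^ 2 := by
  calc ∫ x in (0:ℝ)..(2 * Real.pi), (‖w x‖ ^ 2 - mass w) * ‖w x‖ ^ 2
      = ∫ x in (0:ℝ)..(2 * Real.pi), ‖w x‖ ^ 4 - mass w * ‖w x‖ ^ 2 :=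
        intervalIntegral.integral_congr fun x _ => by ring
    _ = (∫ x in (0:ℝ)..(2 * Real.pi), ‖w x‖ ^ 4)
          - mass w * ∫ x in (0:ℝ)..(2 * Real.pi), ‖w x‖ ^ 2 := by
        rw [intervalIntegral.integral_sub, intervalIntegral.integral_const_mul]
        all_goals exact Continuous.intervalIntegrable (by fun_prop) _ _
    _ = _ := by rw [integral_norm_sq_eq_two_pi_mul_mass]; ring

theorem stmt7_general (w w' : ℝ → ℂ) (hw : ∀ x, HasDerivAt w (w' x) x)
    (hw' : Continuous w')
    (m : ℝ) (hm : m = mass w)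
    (J : ℝ → ℝ) (hJ : ∀ x, HasDerivAt J (‖w x‖ ^ 2 - m) x)
    (u : ℝ → ℂ) (hu : ∀ x, u x = Complex.exp (Complex.I * (J x : ℂ)) * w x) :
    (∫ x in (0:ℝ)..(2 * Real.pi), (u x * (starRingEnd ℂ) (deriv u x)).im)
      + (1 / 2) * ∫ x in (0:ℝ)..(2 * Real.pi), ‖u x‖ ^ 4
    = (∫ x in (0:ℝ)..(2 * Real.pi), (w x * (starRingEnd ℂ) (w' x)).im)
      - (1 / 2) * (∫ x in (0:ℝ)..(2 * Real.pi), ‖w x‖ ^ 4)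
      + 2 * Real.pi * m ^ 2 := by
  have hwc : Continuous w := continuous_iff_continuousAt.mpr fun x => (hw x).continuousAt
  obtain rfl : u = _ := funext hu
  subst hm
  have hcross : ∀ x, (exp (I * J x) * w x * conj (deriv (fun y => exp (I * J y) * w y) x)).im
      = (w x * conj (w' x)).im - (‖w x‖ ^ 2 - mass w) * ‖w x‖ ^ 2 := fun x => by
    rw [((hJ x).cexp_I_mul_ofReal_mul (hw x)).deriv, im_exp_I_mul_mul_conj]
  simp only [hcross, norm_mul, norm_exp_I_mul_ofReal, one_mul]
  rw [intervalIntegral.integral_sub, integral_sub_mass_mul_norm_sq hwc]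
  · ring
  all_goals exact Continuous.intervalIntegrable (by fun_prop) _ _

/-- Transformation of the DNLS Hamiltonian
`H(u) = Im ∫ u ū_x + (1/2) ∫ |u|⁴` under the gauge:
`H(u) = Im ∫ w w̄_x − (1/2) ∫ |w|⁴ + 2π m²`. -/
theorem stmt7 (w w' : ℝ → ℂ) (hw : ∀ x, HasDerivAt w (w' x) x)
    (hw' : Continuous w') (hper : Function.Periodic w (2 * Real.pi))
    (m : ℝ) (hm : m = mass w)
    (J : ℝ → ℝ) (hJ : ∀ x, HasDerivAt J (‖w x‖ ^ 2 - m) x)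
    (u : ℝ → ℂ) (hu : ∀ x, u x = Complex.exp (Complex.I * (J x : ℂ)) * w x) :
    (∫ x in (0:ℝ)..(2 * Real.pi), (u x * (starRingEnd ℂ) (deriv u x)).im)
      + (1 / 2) * ∫ x in (0:ℝ)..(2 * Real.pi), ‖u x‖ ^ 4
    = (∫ x in (0:ℝ)..(2 * Real.pi), (w x * (starRingEnd ℂ) (w' x)).im)
      - (1 / 2) * (∫ x in (0:ℝ)..(2 * Real.pi), ‖w x‖ ^ 4)
      + 2 * Real.pi * m ^ 2 :=
  stmt7_general w w' hw hw' m hm J hJ u hu
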